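/- arXiv:2110.15124 — 4 statements merged into one kernel-verified Lean document; each statement's English description precedes it below -/
import Mathlib

section
/- Let V ~ Uniform(0,1) and define U1 = V, U2 = V + (1/2)·1_{[0,1/2]}(V) - (1/2)·1_{(1/2,1]}(V), U3 = -2V + 1_{[0,1/2]}(V) + 2·1_{(1/2,1]}(V). Then each of U1, U2, U3 is uniform on [0,1] and U1 + U2 + U3 = 3/2 almost surely. -/
/-!
On `[0, 1/2]` and on `(1/2, 1]` both maps are affine. `U₂` is a translation by `±1/2` that swaps
the two halves, so it preserves the uniform law. `U₃` has slope `-2` on each half and maps it onto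
`[0, 1]`, so each half contributes half of the uniform law. On each half the slopes `1, 1, -2` of
`U₁, U₂, U₃` cancel and the intercepts add up to `3/2`.
-/

open MeasureTheory Set

theorem Real.map_volume_affine {a : ℝ} (ha : a ≠ 0) (b : ℝ) :
    volume.map (fun x => a * x + b) = ENNReal.ofReal |a⁻¹| • volume := by
  rw [show (fun x => a * x + b) = (· + b) ∘ (a * ·) from rfl,
    ← Measure.map_map (measurable_add_const b) (measurable_const_mul a),
    Real.map_volume_mul_left ha, Measure.map_smul, map_add_right_eq_self]

theorem Real.map_volume_restrict_of_eqOn_affine {f : ℝ → ℝ} {a : ℝ} (ha : a ≠ 0) {b : ℝ}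
    {s t : Set ℝ} (hs : MeasurableSet s) (hf : EqOn f (fun x => a * x + b) s)
    (hst : (fun x => a * x + b) ⁻¹' t = s) :
    (volume.restrict s).map f = ENNReal.ofReal |a⁻¹| • volume.restrict t := by
  have he : MeasurableEmbedding (fun x : ℝ => a * x + b) :=
    (measurableEmbedding_addRight b).comp (measurableEmbedding_mulLeft₀ ha)
  subst hst
  rw [Measure.map_congr (ae_restrict_of_forall_mem hs hf), ← he.restrict_map,
    Real.map_volume_affine ha, Measure.restrict_smul]

theorem MeasureTheory.Measure.restrict_Icc_eq_restrict_Ioo_add {μ : Measure ℝ}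
    [NullSingletonClass μ] {a b c : ℝ} (hab : a ≤ b) (hbc : b ≤ c) :
    μ.restrict (Icc a c) = μ.restrict (Ioo a b) + μ.restrict (Ioo b c) := by
  rw [← Icc_union_Ioc_eq_Icc hab hbc,
    Measure.restrict_union (disjoint_left.2 fun _ h₁ h₂ => h₂.1.not_ge h₁.2) measurableSet_Ioc,
    Measure.restrict_congr_set Ioo_ae_eq_Icc.symm, Measure.restrict_congr_set Ioo_ae_eq_Ioc.symm]

noncomputable def gaffkeRuschendorf₂ (v : ℝ) : ℝ :=
  v + (1/2) * (Icc (0:ℝ) (1/2)).indicator (fun _ => (1:ℝ)) v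
    - (1/2) * (Ioc (1/2 : ℝ) 1).indicator (fun _ => (1:ℝ)) v

noncomputable def gaffkeRuschendorf₃ (v : ℝ) : ℝ :=
  -2 * v + (Icc (0:ℝ) (1/2)).indicator (fun _ => (1:ℝ)) v
    + 2 * (Ioc (1/2 : ℝ) 1).indicator (fun _ => (1:ℝ)) v

theorem measurable_gaffkeRuschendorf₂ : Measurable gaffkeRuschendorf₂ := by
  unfold gaffkeRuschendorf₂; measurability

theorem measurable_gaffkeRuschendorf₃ : Measurable gaffkeRuschendorf₃ := by
  unfold gaffkeRuschendorf₃; measurability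

section
variable {v : ℝ}

theorem gaffkeRuschendorf₂_of_le_half (h₀ : 0 ≤ v) (h : v ≤ 1/2) :
    gaffkeRuschendorf₂ v = v + 1/2 := by
  rw [gaffkeRuschendorf₂, indicator_of_mem (mem_Icc.2 ⟨h₀, h⟩),
    indicator_of_notMem (fun hv => h.not_gt hv.1)]
  ring

theorem gaffkeRuschendorf₂_of_half_lt (h : 1/2 < v) (h₁ : v ≤ 1) :
    gaffkeRuschendorf₂ v = v - 1/2 := by
  rw [gaffkeRuschendorf₂, indicator_of_notMem (fun hv => h.not_ge hv.2),
    indicator_of_mem (mem_Ioc.2 ⟨h, h₁⟩)]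
  ring

theorem gaffkeRuschendorf₃_of_le_half (h₀ : 0 ≤ v) (h : v ≤ 1/2) :
    gaffkeRuschendorf₃ v = -2 * v + 1 := by
  rw [gaffkeRuschendorf₃, indicator_of_mem (mem_Icc.2 ⟨h₀, h⟩),
    indicator_of_notMem (fun hv => h.not_gt hv.1)]
  ring

theorem gaffkeRuschendorf₃_of_half_lt (h : 1/2 < v) (h₁ : v ≤ 1) :
    gaffkeRuschendorf₃ v = -2 * v + 2 := by
  rw [gaffkeRuschendorf₃, indicator_of_notMem (fun hv => h.not_ge hv.2),
    indicator_of_mem (mem_Ioc.2 ⟨h, h₁⟩)]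
  ring

theorem add_gaffkeRuschendorf₂_add_gaffkeRuschendorf₃ (hv : v ∈ Icc (0:ℝ) 1) :
    v + gaffkeRuschendorf₂ v + gaffkeRuschendorf₃ v = 3/2 := by
  rcases le_or_gt v (1/2) with h | h
  · rw [gaffkeRuschendorf₂_of_le_half hv.1 h, gaffkeRuschendorf₃_of_le_half hv.1 h]; ring
  · rw [gaffkeRuschendorf₂_of_half_lt h hv.2, gaffkeRuschendorf₃_of_half_lt h hv.2]; ring

end

theorem map_gaffkeRuschendorf₂ :
    (volume.restrict (Icc (0:ℝ) 1)).map gaffkeRuschendorf₂ = volume.restrict (Icc 0 1) := by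
  have left : (volume.restrict (Ioo (0:ℝ) (1/2))).map gaffkeRuschendorf₂ =
      volume.restrict (Ioo (1/2) 1) := by
    rw [Real.map_volume_restrict_of_eqOn_affine (b := 1/2) (t := Ioo (1/2) 1) one_ne_zero
      measurableSet_Ioo, inv_one, abs_one, ENNReal.ofReal_one, one_smul]
    · intro v hv
      rw [gaffkeRuschendorf₂_of_le_half hv.1.le hv.2.le]; ring
    · ext x; simp only [mem_preimage, mem_Ioo]; grind
  have right : (volume.restrict (Ioo (1/2:ℝ) 1)).map gaffkeRuschendorf₂ =
      volume.restrict (Ioo 0 (1/2)) := by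
    rw [Real.map_volume_restrict_of_eqOn_affine (b := -(1/2)) (t := Ioo 0 (1/2)) one_ne_zero
      measurableSet_Ioo, inv_one, abs_one, ENNReal.ofReal_one, one_smul]
    · intro v hv
      rw [gaffkeRuschendorf₂_of_half_lt hv.1 hv.2.le]; ring
    · ext x; simp only [mem_preimage, mem_Ioo]; grind
  rw [Measure.restrict_Icc_eq_restrict_Ioo_add (b := 1/2) (by norm_num) (by norm_num),
    Measure.map_add _ _ measurable_gaffkeRuschendorf₂, left, right, add_comm]

theorem map_gaffkeRuschendorf₃ :
    (volume.restrict (Icc (0:ℝ) 1)).map gaffkeRuschendorf₃ = volume.restrict (Icc 0 1) := by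
  have left : (volume.restrict (Ioo (0:ℝ) (1/2))).map gaffkeRuschendorf₃ =
      ENNReal.ofReal |(-2)⁻¹| • volume.restrict (Ioo 0 1) :=
    Real.map_volume_restrict_of_eqOn_affine (by norm_num) measurableSet_Ioo
      (fun v hv => gaffkeRuschendorf₃_of_le_half hv.1.le hv.2.le)
      (by ext x; simp only [mem_preimage, mem_Ioo]; grind)
  have right : (volume.restrict (Ioo (1/2:ℝ) 1)).map gaffkeRuschendorf₃ =
      ENNReal.ofReal |(-2)⁻¹| • volume.restrict (Ioo 0 1) :=
    Real.map_volume_restrict_of_eqOn_affine (by norm_num) measurableSet_Ioo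
      (fun v hv => gaffkeRuschendorf₃_of_half_lt hv.1 hv.2.le)
      (by ext x; simp only [mem_preimage, mem_Ioo]; grind)
  have half : ENNReal.ofReal |(-2 : ℝ)⁻¹| = 2⁻¹ := by
    rw [abs_inv, abs_neg, abs_two, ENNReal.ofReal_inv_of_pos two_pos, ENNReal.ofReal_ofNat]
  conv_lhs => rw [Measure.restrict_Icc_eq_restrict_Ioo_add (b := 1/2) (by norm_num) (by norm_num)]
  rw [Measure.map_add _ _ measurable_gaffkeRuschendorf₃, left, right, half, ← add_smul,
    ENNReal.inv_two_add_inv_two, one_smul, Measure.restrict_congr_set Ioo_ae_eq_Icc]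

theorem gaffke_ruschendorf_3CTM_general {Ω : Type*} [MeasurableSpace Ω] (μ : Measure Ω)
    (V : Ω → ℝ) (hV : Measurable V)
    (hunif : μ.map V = volume.restrict (Icc (0:ℝ) 1))
    (U₁ U₂ U₃ : Ω → ℝ)
    (hU₁ : U₁ = fun ω => V ω)
    (hU₂ : U₂ = fun ω => V ω
      + (1/2) * (Icc (0:ℝ) (1/2)).indicator (fun _ => (1:ℝ)) (V ω)
      - (1/2) * (Ioc (1/2 : ℝ) 1).indicator (fun _ => (1:ℝ)) (V ω))
    (hU₃ : U₃ = fun ω => -2 * V ω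
      + (Icc (0:ℝ) (1/2)).indicator (fun _ => (1:ℝ)) (V ω)
      + 2 * (Ioc (1/2 : ℝ) 1).indicator (fun _ => (1:ℝ)) (V ω)) :
    μ.map U₁ = volume.restrict (Icc (0:ℝ) 1) ∧
    μ.map U₂ = volume.restrict (Icc (0:ℝ) 1) ∧
    μ.map U₃ = volume.restrict (Icc (0:ℝ) 1) ∧
    (∀ᵐ ω ∂μ, U₁ ω + U₂ ω + U₃ ω = 3/2) := by
  replace hU₂ : U₂ = gaffkeRuschendorf₂ ∘ V := hU₂
  replace hU₃ : U₃ = gaffkeRuschendorf₃ ∘ V := hU₃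
  subst hU₁ hU₂ hU₃
  refine ⟨hunif, ?_, ?_, ?_⟩
  · rw [← Measure.map_map measurable_gaffkeRuschendorf₂ hV, hunif, map_gaffkeRuschendorf₂]
  · rw [← Measure.map_map measurable_gaffkeRuschendorf₃ hV, hunif, map_gaffkeRuschendorf₃]
  · have hV_mem : ∀ᵐ ω ∂μ, V ω ∈ Icc (0:ℝ) 1 :=
      ae_of_ae_map hV.aemeasurable (hunif ▸ ae_restrict_mem measurableSet_Icc)
    filter_upwards [hV_mem] with ω hω
    exact add_gaffkeRuschendorf₂_add_gaffkeRuschendorf₃ hω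

/-- The Gaffke–Rüschendorf strict 3-countermonotonic construction:
`U₁ = V`, `U₂ = V + ½·1_{[0,1/2]}(V) − ½·1_{(1/2,1]}(V)`,
`U₃ = −2V + 1_{[0,1/2]}(V) + 2·1_{(1/2,1]}(V)`.  All three are uniform on `[0,1]`
and they sum to `3/2` almost surely. -/
theorem gaffke_ruschendorf_3CTM {Ω : Type*} [MeasurableSpace Ω] (μ : Measure Ω)
    [IsProbabilityMeasure μ] (V : Ω → ℝ) (hV : Measurable V)
    (hunif : μ.map V = volume.restrict (Icc (0:ℝ) 1))
    (U₁ U₂ U₃ : Ω → ℝ)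
    (hU₁ : U₁ = fun ω => V ω)
    (hU₂ : U₂ = fun ω => V ω
      + (1/2) * (Icc (0:ℝ) (1/2)).indicator (fun _ => (1:ℝ)) (V ω)
      - (1/2) * (Ioc (1/2 : ℝ) 1).indicator (fun _ => (1:ℝ)) (V ω))
    (hU₃ : U₃ = fun ω => -2 * V ω
      + (Icc (0:ℝ) (1/2)).indicator (fun _ => (1:ℝ)) (V ω)
      + 2 * (Ioc (1/2 : ℝ) 1).indicator (fun _ => (1:ℝ)) (V ω)) :
    μ.map U₁ = volume.restrict (Icc (0:ℝ) 1) ∧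
    μ.map U₂ = volume.restrict (Icc (0:ℝ) 1) ∧
    μ.map U₃ = volume.restrict (Icc (0:ℝ) 1) ∧
    (∀ᵐ ω ∂μ, U₁ ω + U₂ ω + U₃ ω = 3/2) :=
  gaffke_ruschendorf_3CTM_general μ V hV hunif U₁ U₂ U₃ hU₁ hU₂ hU₃
end

section
/- Let U_1 ~ Uniform(0,1), d ≥ 3, U_i = (2^{i-2} U_1 + 1/2) mod 1 for i = 2,...,d-1, and U_d = 1 - (2^{d-2} U_1) mod 1. Then each U_i is uniform on [0,1] and U_1 + ... + U_d = d/2 almost surely. -/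
open MeasureTheory Set

instance fact_zero_lt_one_real : Fact ((0:ℝ) < 1) := ⟨one_pos⟩

/-- The key fractional-part identity. -/
lemma fract_add_half (y : ℝ) :
    Int.fract (y + 1/2) = Int.fract (2*y) - Int.fract y + 1/2 := by
  set t := Int.fract y with ht
  have h0 : 0 ≤ t := Int.fract_nonneg y
  have h1 : t < 1 := Int.fract_lt_one y
  have hy : y = (⌊y⌋ : ℝ) + t := by rw [ht]; exact (Int.floor_add_fract y).symm
  have e1 : Int.fract (y + 1/2) = Int.fract (t + 1/2) := by
    rw [hy, add_assoc, Int.fract_intCast_add]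
  have e2 : Int.fract (2*y) = Int.fract (2*t) := by
    have h2 : 2*y = ((2*⌊y⌋ : ℤ) : ℝ) + 2*t := by push_cast; linarith
    rw [h2, Int.fract_intCast_add]
  rcases lt_or_ge t (1/2) with h | h
  · rw [e1, e2, Int.fract_eq_self.2 ⟨by linarith, by linarith⟩,
      Int.fract_eq_self.2 ⟨by linarith, by linarith⟩]
    ring
  · have e3 : Int.fract (t + 1/2) = t - 1/2 := by
      rw [show t + 1/2 = (t - 1/2) + ((1:ℤ):ℝ) by push_cast; ring, Int.fract_add_intCast,
        Int.fract_eq_self.2 ⟨by linarith, by linarith⟩]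
    have e4 : Int.fract (2*t) = 2*t - 1 := by
      rw [show 2*t = (2*t - 1) + ((1:ℤ):ℝ) by push_cast; ring, Int.fract_add_intCast,
        Int.fract_eq_self.2 ⟨by linarith, by linarith⟩]
      push_cast
      ring
    rw [e1, e2, e3, e4]; ring

/-- Telescoping sum of fractional parts. -/
lemma sum_fract_half (x : ℝ) (m : ℕ) :
    ∑ j ∈ Finset.range m, Int.fract ((2:ℝ)^j * x + 1/2)
      = Int.fract ((2:ℝ)^m * x) - Int.fract x + m/2 := by
  induction m with
  | zero => simp
  | succ k ih =>
    rw [Finset.sum_range_succ, ih, fract_add_half ((2:ℝ)^k * x),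
      show (2:ℝ) * ((2:ℝ)^k * x) = (2:ℝ)^(k+1) * x by ring]
    push_cast
    ring

/-- The map `x ↦ fract (n x + b)` preserves the uniform measure on `[0,1]`, for `n` a
nonzero integer. -/
lemma map_fract_affine (n : ℤ) (hn : n ≠ 0) (b : ℝ) :
    (volume.restrict (Icc (0:ℝ) 1)).map (fun x => Int.fract ((n:ℝ) * x + b)) =
      volume.restrict (Icc (0:ℝ) 1) := by
  set g : AddCircle (1:ℝ) → ℝ := fun z =>
    ((AddCircle.measurableEquivIco (1:ℝ) 0 z : Ico (0:ℝ) (0+1)) : ℝ) with hgdef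
  have hg : Measurable g :=
    measurable_subtype_coe.comp (AddCircle.measurableEquivIco (1:ℝ) 0).measurable
  have hgmk : ∀ x : ℝ, g ((x : ℝ) : AddCircle (1:ℝ)) = Int.fract x := by
    intro x
    have : g ((x : ℝ) : AddCircle (1:ℝ))
        = ((AddCircle.equivIco (1:ℝ) 0 (QuotientAddGroup.mk x) : ℝ)) := rfl
    rw [this, AddCircle.coe_equivIco_mk_apply]
    simp
  have hmkm : Measurable (fun x : ℝ => ((x : ℝ) : AddCircle (1:ℝ))) :=
    AddCircle.measurable_mk'
  have hmk : MeasurePreserving (fun x : ℝ => ((x : ℝ) : AddCircle (1:ℝ)))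
      (volume.restrict (Ioc (0:ℝ) 1)) volume := by
    have := AddCircle.measurePreserving_mk (1:ℝ) 0
    simpa using this
  set F : AddCircle (1:ℝ) → AddCircle (1:ℝ) := fun z => ((b:ℝ) : AddCircle (1:ℝ)) + n • z
    with hFdef
  have hF : MeasurePreserving F volume volume :=
    (measurePreserving_add_left volume (((b:ℝ) : AddCircle (1:ℝ)))).comp
      (MeasureTheory.Measure.measurePreserving_zsmul volume hn)
  have hcomp : (fun x : ℝ => Int.fract ((n:ℝ) * x + b))
      = g ∘ (F ∘ fun x : ℝ => ((x : ℝ) : AddCircle (1:ℝ))) := by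
    funext x
    have h1 : F ((x : ℝ) : AddCircle (1:ℝ)) = (((b + (n:ℝ) * x : ℝ)) : AddCircle (1:ℝ)) := by
      rw [hFdef]
      have : (n • ((x : ℝ) : AddCircle (1:ℝ))) = (((n • x : ℝ)) : AddCircle (1:ℝ)) := by
        simp
      simp only [this]
      rw [← QuotientAddGroup.mk_add]
      norm_num [zsmul_eq_mul]
    simp only [Function.comp_apply, h1, hgmk]
    rw [add_comm]
  have h4 : Measure.map Int.fract (volume.restrict (Ico (0:ℝ) 1))
      = volume.restrict (Ico (0:ℝ) 1) := by
    have hae : (Int.fract : ℝ → ℝ) =ᵐ[volume.restrict (Ico (0:ℝ) 1)] (fun x => x) :=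
      (ae_restrict_iff' measurableSet_Ico).2 (ae_of_all _ fun x hx => Int.fract_eq_self.2 hx)
    rw [Measure.map_congr hae]
    exact Measure.map_id
  have e3 : volume.map g = volume.restrict (Icc (0:ℝ) 1) := by
    rw [← hmk.map_eq, Measure.map_map hg hmkm,
      show g ∘ (fun x : ℝ => ((x : ℝ) : AddCircle (1:ℝ))) = Int.fract from funext hgmk,
      MeasureTheory.restrict_Ioc_eq_restrict_Icc, ← MeasureTheory.restrict_Ico_eq_restrict_Icc,
      h4, MeasureTheory.restrict_Ico_eq_restrict_Icc]
  calc (volume.restrict (Icc (0:ℝ) 1)).map (fun x => Int.fract ((n:ℝ) * x + b))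
      = (volume.restrict (Ioc (0:ℝ) 1)).map
          (g ∘ (F ∘ fun x : ℝ => ((x : ℝ) : AddCircle (1:ℝ)))) := by
        rw [MeasureTheory.restrict_Ioc_eq_restrict_Icc, hcomp]
    _ = ((volume.restrict (Ioc (0:ℝ) 1)).map
          ((F ∘ fun x : ℝ => ((x : ℝ) : AddCircle (1:ℝ))))).map g :=
        (Measure.map_map hg (hF.measurable.comp hmkm)).symm
    _ = volume.map g := by rw [(hF.comp hmk).map_eq]
    _ = volume.restrict (Icc (0:ℝ) 1) := e3

lemma map_fract_affine_comp {Ω : Type*} [MeasurableSpace Ω] (μ : Measure Ω)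
    (V : Ω → ℝ) (hV : Measurable V)
    (hunif : μ.map V = volume.restrict (Icc (0:ℝ) 1))
    (n : ℤ) (hn : n ≠ 0) (b : ℝ) :
    μ.map (fun ω => Int.fract ((n:ℝ) * V ω + b)) = volume.restrict (Icc (0:ℝ) 1) := by
  have hm : Measurable (fun x : ℝ => Int.fract ((n:ℝ) * x + b)) :=
    measurable_fract.comp ((measurable_id.const_mul _).add_const b)
  rw [show (fun ω => Int.fract ((n:ℝ) * V ω + b))
      = (fun x : ℝ => Int.fract ((n:ℝ) * x + b)) ∘ V from rfl,
    ← Measure.map_map hm hV, hunif, map_fract_affine n hn b]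

/-- The Arvidsen–Johnson strict d-countermonotonic construction:
`U_1 = V`, `U_i = (2^{i-2} V + 1/2) mod 1` for `2 ≤ i ≤ d-1`,
`U_d = 1 - (2^{d-2} V) mod 1`.  Each `U_i` is uniform on `[0,1]` and
`U_1 + ⋯ + U_d = d/2` almost surely. -/
theorem arvidsen_johnson_dCTM {Ω : Type*} [MeasurableSpace Ω] (μ : Measure Ω)
    [IsProbabilityMeasure μ] (d : ℕ) (hd : 3 ≤ d)
    (V : Ω → ℝ) (hV : Measurable V)
    (hunif : μ.map V = volume.restrict (Icc (0:ℝ) 1))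
    (U : ℕ → Ω → ℝ)
    (hU1 : U 1 = fun ω => V ω)
    (hUmid : ∀ i, 2 ≤ i → i ≤ d - 1 →
      U i = fun ω => Int.fract ((2:ℝ) ^ (i - 2) * V ω + 1/2))
    (hUd : U d = fun ω => 1 - Int.fract ((2:ℝ) ^ (d - 2) * V ω)) :
    (∀ i, 1 ≤ i → i ≤ d →
      μ.map (U i) = volume.restrict (Icc (0:ℝ) 1)) ∧
    (∀ᵐ ω ∂μ, ∑ i ∈ Finset.Icc 1 d, U i ω = d / 2) := by
  constructor
  · intro i hi1 hid
    by_cases h1 : i = 1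
    · subst h1
      rw [hU1]
      exact hunif
    by_cases hdd : i = d
    · subst hdd
      rw [hUd]
      -- a.e., `fract (2^(i-2) V ω) ≠ 0`, so `1 - fract y = fract (-y)` a.e.
      set k := i - 2 with hk
      have hSc : {x : ℝ | Int.fract ((2:ℝ)^k * x) = 0}.Countable := by
        apply Set.Countable.mono _ (Set.countable_range (fun m : ℤ => (m:ℝ)/(2:ℝ)^k))
        intro x hx
        simp only [Set.mem_setOf_eq] at hx
        have heq : (2:ℝ)^k * x = (⌊(2:ℝ)^k * x⌋ : ℝ) := by
          have h := Int.floor_add_fract ((2:ℝ)^k * x)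
          rw [hx, add_zero] at h
          linarith
        have h2k : (2:ℝ)^k ≠ 0 := by positivity
        refine ⟨⌊(2:ℝ)^k * x⌋, ?_⟩
        show (↑⌊(2:ℝ)^k * x⌋ : ℝ) / (2:ℝ)^k = x
        rw [div_eq_iff h2k]
        linarith [heq]
      have hnull : μ {ω | Int.fract ((2:ℝ)^k * V ω) = 0} = 0 := by
        have hmeas : MeasurableSet {x : ℝ | Int.fract ((2:ℝ)^k * x) = 0} :=
          hSc.measurableSet
        have : μ {ω | Int.fract ((2:ℝ)^k * V ω) = 0}
            = (μ.map V) {x : ℝ | Int.fract ((2:ℝ)^k * x) = 0} := by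
          rw [Measure.map_apply hV hmeas]
          rfl
        rw [this, hunif]
        refine le_antisymm (le_trans (Measure.restrict_apply_le _ _) ?_) zero_le
        rw [hSc.measure_zero]
      have hae : (fun ω => 1 - Int.fract ((2:ℝ)^k * V ω))
          =ᵐ[μ] (fun ω => Int.fract (((-(2^k) : ℤ) : ℝ) * V ω + 0)) := by
        rw [Filter.EventuallyEq, ae_iff]
        refine measure_mono_null ?_ hnull
        intro ω hω
        simp only [Set.mem_setOf_eq] at hω ⊢
        by_contra h0
        apply hω
        have : ((-(2^k) : ℤ) : ℝ) * V ω + 0 = -((2:ℝ)^k * V ω) := by push_cast; ring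
        rw [this, Int.fract_neg h0]
      rw [Measure.map_congr hae]
      exact map_fract_affine_comp μ V hV hunif (-(2^k)) (by simp) 0
    · have h2 : 2 ≤ i := by omega
      have hle : i ≤ d - 1 := by omega
      rw [hUmid i h2 hle]
      have hcast : ((2:ℝ))^(i-2) = (((2^(i-2) : ℤ)) : ℝ) := by push_cast; ring
      rw [show (fun ω => Int.fract ((2:ℝ)^(i-2) * V ω + 1/2))
          = fun ω => Int.fract ((((2^(i-2) : ℤ)) : ℝ) * V ω + 1/2) by
        funext ω; rw [hcast]]
      exact map_fract_affine_comp μ V hV hunif (2^(i-2)) (by positivity) (1/2)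
  · -- almost sure part
    have hV01 : ∀ᵐ ω ∂μ, V ω ∈ Ico (0:ℝ) 1 := by
      rw [ae_iff]
      have : {ω | ¬ V ω ∈ Ico (0:ℝ) 1} = V ⁻¹' (Ico (0:ℝ) 1)ᶜ := rfl
      rw [this, ← Measure.map_apply hV measurableSet_Ico.compl, hunif,
        Measure.restrict_apply measurableSet_Ico.compl]
      have h1 : (Ico (0:ℝ) 1)ᶜ ∩ Icc (0:ℝ) 1 = {1} := by
        ext x
        simp only [Set.mem_inter_iff, Set.mem_compl_iff, Set.mem_Ico, Set.mem_Icc,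
          Set.mem_singleton_iff, not_and, not_lt]
        constructor
        · rintro ⟨h, h0, h1⟩; by_cases hx : 0 ≤ x <;> [linarith [h hx]; linarith]
        · rintro rfl; exact ⟨fun _ => le_refl 1, by norm_num, le_refl 1⟩
      rw [h1, Real.volume_singleton]
    filter_upwards [hV01] with ω hx
    set x := V ω with hxdef
    have hs1 : Finset.Icc 1 d = insert 1 (insert d (Finset.Icc 2 (d-1))) := by
      ext j
      simp only [Finset.mem_Icc, Finset.mem_insert]
      omega
    have h1n : (1:ℕ) ∉ insert d (Finset.Icc 2 (d-1)) := by
      simp only [Finset.mem_insert, Finset.mem_Icc]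
      omega
    have hdn : d ∉ Finset.Icc 2 (d-1) := by
      simp only [Finset.mem_Icc]
      omega
    rw [hs1, Finset.sum_insert h1n, Finset.sum_insert hdn, hU1, hUd]
    have hsmid : ∑ i ∈ Finset.Icc 2 (d-1), U i ω
        = Int.fract ((2:ℝ)^(d-2) * x) - Int.fract x + ((d:ℝ) - 2)/2 := by
      have e1 : ∑ i ∈ Finset.Icc 2 (d-1), U i ω
          = ∑ i ∈ Finset.Icc 2 (d-1), Int.fract ((2:ℝ)^(i-2) * x + 1/2) := by
        refine Finset.sum_congr rfl fun i hi => ?_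
        rw [Finset.mem_Icc] at hi
        rw [hUmid i hi.1 hi.2]
      have e2 : Finset.Icc 2 (d-1) = Finset.Ico 2 d := by
        ext j
        simp only [Finset.mem_Icc, Finset.mem_Ico]
        omega
      rw [e1, e2, Finset.sum_Ico_eq_sum_range]
      have e3 : ∑ j ∈ Finset.range (d - 2), Int.fract ((2:ℝ)^(2+j-2) * x + 1/2)
          = ∑ j ∈ Finset.range (d - 2), Int.fract ((2:ℝ)^j * x + 1/2) := by
        refine Finset.sum_congr rfl fun j _ => ?_
        rw [show 2 + j - 2 = j from by omega]
      rw [e3, sum_fract_half x (d-2)]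
      have : ((d - 2 : ℕ) : ℝ) = (d:ℝ) - 2 := by
        have : (2:ℕ) ≤ d := by omega
        push_cast [Nat.cast_sub this]
        ring
      rw [this]
    rw [hsmid]
    have hfr : Int.fract x = x := Int.fract_eq_self.2 hx
    rw [hfr]
    have hd3 : (3:ℝ) ≤ (d:ℝ) := by exact_mod_cast hd
    ring
end

section
/- Let U be a d-dimensional random vector with coordinates marginally Uniform(0,1) and sum almost surely equal to d/2, let π be a uniformly random permutation of {0,...,d-1} independent of U, and define W_l = (π(l) + U_l)/d. Then each W_l is Uniform(0,1) and W_1 + ... + W_d = d/2 almost surely. -/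
open MeasureTheory Set

private lemma clamp_sum' (d : ℕ) (s : ℝ) :
    ∑ k ∈ Finset.range d, min 1 (max 0 (s - k)) = min (d : ℝ) (max 0 s) := by
  induction d with
  | zero => simp
  | succ n ih =>
    rw [Finset.sum_range_succ, ih]
    push_cast
    rcases le_total s 0 with h0 | h0 <;> rcases le_total s n with h1 | h1 <;>
      rcases le_total s (n+1) with h2 | h2 <;>
      simp only [min_def, max_def] <;> split_ifs <;> push_cast at * <;> linarith

private lemma ofReal_min_one' (a : ℝ) :
    ENNReal.ofReal (min a 1) = ENNReal.ofReal (min 1 (max 0 a)) := by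
  rcases le_total a 0 with h | h
  · rw [min_comm]
    rw [max_eq_left h, min_eq_right (by linarith : a ≤ 1)]
    simp [ENNReal.ofReal_eq_zero.2 h]
  · rw [max_eq_right h, min_comm]

private lemma min_scale' (d : ℝ) (hd : 0 < d) (t : ℝ) :
    min d (max 0 (t * d)) = d * min 1 (max 0 t) := by
  rcases le_total t 0 with h | h <;> rcases le_total t 1 with h1 | h1 <;>
    simp only [min_def, max_def] <;> split_ifs <;> nlinarith

private lemma perm_fiber_card' (d : ℕ) (l k k' : Fin d) :
    Fintype.card {σ : Equiv.Perm (Fin d) // σ l = k}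
      = Fintype.card {σ : Equiv.Perm (Fin d) // σ l = k'} := by
  apply Fintype.card_congr
  refine ⟨fun σ => ⟨Equiv.swap k k' * σ.1, by simp [Equiv.Perm.mul_apply, σ.2]⟩,
    fun σ => ⟨Equiv.swap k k' * σ.1, by simp [Equiv.Perm.mul_apply, σ.2]⟩, ?_, ?_⟩ <;>
    intro σ <;> apply Subtype.ext <;>
    simp [← mul_assoc, Equiv.swap_mul_self]

/-- Latin Hypercube iteration preserves uniform marginals and the constant
sum `d/2`: if `U` has `Uniform(0,1)` marginals and `∑ U_l = d/2` a.s., and `π`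
is a uniformly random permutation of `{0,…,d-1}` independent of `U`, then each
`W_l = (π(l) + U_l)/d` is `Uniform(0,1)` and `∑ W_l = d/2` a.s. -/
theorem latin_hypercube_preserves_dCTM {Ω : Type*} [MeasurableSpace Ω]
    (μ : Measure Ω) [IsProbabilityMeasure μ] (d : ℕ) (hd : 1 ≤ d)
    (U : Ω → Fin d → ℝ) (hU : Measurable U)
    (hmarg : ∀ l : Fin d,
      μ.map (fun ω => U ω l) = volume.restrict (Icc (0:ℝ) 1))
    (hsum : ∀ᵐ ω ∂μ, ∑ l : Fin d, U ω l = d / 2)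
    (π : Ω → Equiv.Perm (Fin d))
    (hπunif : ∀ σ : Equiv.Perm (Fin d),
      μ {ω | π ω = σ} = (Nat.factorial d : ENNReal)⁻¹)
    (hindep : ∀ σ : Equiv.Perm (Fin d), ∀ s : Set (Fin d → ℝ), MeasurableSet s →
      μ ({ω | π ω = σ} ∩ U ⁻¹' s) = μ {ω | π ω = σ} * μ (U ⁻¹' s)) :
    (∀ l : Fin d,
      μ.map (fun ω => (((π ω l : ℕ) : ℝ) + U ω l) / d)
        = volume.restrict (Icc (0:ℝ) 1)) ∧
    (∀ᵐ ω ∂μ, ∑ l : Fin d, (((π ω l : ℕ) : ℝ) + U ω l) / d = d / 2) := by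
  classical
  haveI : NeZero d := ⟨by omega⟩
  have hd0 : (0:ℝ) < d := by exact_mod_cast hd
  -- Null measurable structure for π
  set E : Equiv.Perm (Fin d) → Set Ω := fun σ => {ω | π ω = σ} with hE
  set H : Equiv.Perm (Fin d) → Set Ω := fun σ => toMeasurable μ (E σ) with hH
  set G : Equiv.Perm (Fin d) → Set Ω := fun σ => ⋂ τ, ⋂ _ : τ ≠ σ, (H τ)ᶜ with hG
  have hGmeas : ∀ σ, MeasurableSet (G σ) := fun σ =>
    MeasurableSet.iInter fun τ => MeasurableSet.iInter fun _ =>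
      (measurableSet_toMeasurable μ _).compl
  have hGE : ∀ σ, G σ ⊆ E σ := by
    intro σ ω hω
    simp only [hG, mem_iInter, mem_compl_iff] at hω
    by_contra h
    exact hω (π ω) h (subset_toMeasurable μ _ rfl)
  have hHμ : ∀ σ, μ (H σ) = ((d.factorial : ℕ) : ENNReal)⁻¹ := fun σ => by
    rw [hH, measure_toMeasurable]; exact hπunif σ
  have hEdisj : ∀ σ τ, σ ≠ τ → Disjoint (E σ) (E τ) := by
    intro σ τ hστ
    rw [Set.disjoint_left]
    rintro ω h1 h2
    exact hστ (h1.symm.trans h2)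
  have hGdisj : Pairwise (Function.onFun Disjoint G) := fun σ τ hστ =>
    ((hEdisj σ τ hστ).mono (hGE σ) (hGE τ))
  have hcard : Fintype.card (Equiv.Perm (Fin d)) = d.factorial := by
    simp [Fintype.card_perm, Fintype.card_fin]
  have hfact0 : ((d.factorial : ℕ) : ENNReal) ≠ 0 := by
    exact_mod_cast Nat.cast_ne_zero.2 d.factorial_ne_zero
  have hGcompl : ∀ σ, μ (G σ)ᶜ ≤ ((d.factorial - 1 : ℕ) : ENNReal) * ((d.factorial : ℕ) : ENNReal)⁻¹ := by
    intro σ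
    have hsub : (G σ)ᶜ ⊆ ⋃ τ ∈ Finset.univ.erase σ, H τ := by
      intro ω hω
      simp only [hG, compl_iInter, mem_iUnion, mem_compl_iff, not_not] at hω
      obtain ⟨τ, hτ, hωτ⟩ := hω
      exact mem_biUnion (Finset.mem_erase.2 ⟨hτ, Finset.mem_univ τ⟩) hωτ
    calc μ (G σ)ᶜ ≤ ∑ τ ∈ Finset.univ.erase σ, μ (H τ) :=
          le_trans (measure_mono hsub) (measure_biUnion_finset_le _ _)
      _ = ((d.factorial - 1 : ℕ) : ENNReal) * ((d.factorial : ℕ) : ENNReal)⁻¹ := by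
          rw [Finset.sum_congr rfl (fun τ _ => hHμ τ), Finset.sum_const,
            Finset.card_erase_of_mem (Finset.mem_univ σ), Finset.card_univ, hcard,
            nsmul_eq_mul]
  have hUnion : μ (⋃ σ, G σ) = 1 := by
    have h1 : μ (⋃ σ, G σ) = ∑ σ, μ (G σ) := by
      rw [measure_iUnion hGdisj hGmeas, tsum_fintype]
    refine le_antisymm prob_le_one ?_
    rw [h1]
    have h2 : ∑ σ : Equiv.Perm (Fin d), (μ (G σ) + μ (G σ)ᶜ) = ((d.factorial : ℕ) : ENNReal) := by
      simp only [measure_add_measure_compl (hGmeas _)]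
      simp [Finset.card_univ, hcard]
    have h3 : ∑ σ : Equiv.Perm (Fin d), μ (G σ)ᶜ ≤ ((d.factorial - 1 : ℕ) : ENNReal) := by
      calc ∑ σ : Equiv.Perm (Fin d), μ (G σ)ᶜ
          ≤ ∑ _σ : Equiv.Perm (Fin d), ((d.factorial - 1 : ℕ) : ENNReal) * ((d.factorial : ℕ) : ENNReal)⁻¹ :=
            Finset.sum_le_sum fun σ _ => hGcompl σ
        _ = ((d.factorial : ℕ) : ENNReal) * (((d.factorial - 1 : ℕ) : ENNReal) * ((d.factorial : ℕ) : ENNReal)⁻¹) := by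
            simp [Finset.card_univ, hcard, mul_comm]
        _ = ((d.factorial - 1 : ℕ) : ENNReal) := by
            rw [mul_comm ((d.factorial - 1 : ℕ) : ENNReal), ← mul_assoc,
              ENNReal.mul_inv_cancel hfact0 (ENNReal.natCast_ne_top _)]
            ring
    have h4 : (1 : ENNReal) + ((d.factorial - 1 : ℕ) : ENNReal) = ((d.factorial : ℕ) : ENNReal) := by
      rw [← Nat.cast_one, ← Nat.cast_add]
      congr 1
      have := d.factorial_pos
      omega
    have h5 : (1 : ENNReal) + ((d.factorial - 1 : ℕ) : ENNReal)
        ≤ (∑ σ, μ (G σ)) + ((d.factorial - 1 : ℕ) : ENNReal) := by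
      rw [h4, ← h2, Finset.sum_add_distrib]
      exact add_le_add le_rfl h3
    exact (ENNReal.add_le_add_iff_right (ENNReal.natCast_ne_top _)).1 h5
  have hN : μ (⋃ σ, G σ)ᶜ = 0 := by
    have h := measure_add_measure_compl (μ := μ) (MeasurableSet.iUnion hGmeas)
    rw [hUnion, measure_univ] at h
    nth_rewrite 2 [← add_zero (1:ENNReal)] at h
    exact (ENNReal.add_right_inj ENNReal.one_ne_top).1 h
  -- a measurable modification of π
  set g : Ω → Equiv.Perm (Fin d) := fun ω => if h : ∃ σ, ω ∈ G σ then h.choose else 1 with hgdef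
  have hgG : ∀ ω σ, ω ∈ G σ → g ω = σ := by
    intro ω σ hω
    have hex : ∃ σ, ω ∈ G σ := ⟨σ, hω⟩
    have h1 : π ω = hex.choose := hGE _ hex.choose_spec
    have h2 : π ω = σ := hGE _ hω
    simp only [hgdef, dif_pos hex]
    rw [← h1, h2]
  have hgπ : ∀ᵐ ω ∂μ, g ω = π ω := by
    rw [ae_iff]
    refine measure_mono_null (fun ω hω => ?_) hN
    simp only [mem_compl_iff, mem_iUnion, not_exists]
    intro σ hσ
    exact hω ((hgG ω σ hσ).trans ((hGE σ hσ) : π ω = σ).symm)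
  have hfib : ∀ σ, MeasurableSet {ω | g ω = σ} := by
    intro σ
    by_cases h1 : σ = 1
    · subst h1
      have heq : {ω | g ω = 1} = G 1 ∪ (⋃ τ, G τ)ᶜ := by
        ext ω
        simp only [mem_setOf_eq, mem_union, mem_compl_iff, mem_iUnion, not_exists]
        constructor
        · intro hg
          by_cases hex : ∃ τ, ω ∈ G τ
          · obtain ⟨τ, hτ⟩ := hex
            left
            have : τ = 1 := (hgG ω τ hτ).symm.trans hg
            rwa [this] at hτ
          · right; intro τ hτ; exact hex ⟨τ, hτ⟩
        · rintro (h | h)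
          · exact hgG ω 1 h
          · simp only [hgdef]
            rw [dif_neg (not_exists.2 h)]
      rw [heq]; exact (hGmeas 1).union (MeasurableSet.iUnion hGmeas).compl
    · have heq : {ω | g ω = σ} = G σ := by
        ext ω
        simp only [mem_setOf_eq]
        constructor
        · intro hg
          by_cases hex : ∃ τ, ω ∈ G τ
          · obtain ⟨τ, hτ⟩ := hex
            have : τ = σ := (hgG ω τ hτ).symm.trans hg
            rwa [this] at hτ
          · exfalso
            apply h1
            simp only [hgdef] at hg
            rw [dif_neg hex] at hg
            exact hg.symm
        · exact hgG ω σ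
      rw [heq]; exact hGmeas σ
  letI : MeasurableSpace (Equiv.Perm (Fin d)) := ⊤
  haveI : MeasurableSingletonClass (Equiv.Perm (Fin d)) := ⟨fun _ => trivial⟩
  have hgmeas : Measurable g := measurable_to_countable' fun σ => hfib σ
  have hUl : ∀ l : Fin d, Measurable fun ω => U ω l := fun l =>
    (measurable_pi_apply l).comp hU
  have hW'meas : ∀ l : Fin d, Measurable fun ω => (((g ω l : ℕ) : ℝ) + U ω l) / d := by
    intro l
    exact (((measurable_from_top (f := fun σ : Equiv.Perm (Fin d) => ((σ l : ℕ) : ℝ))).comp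
      hgmeas).add (hUl l)).div_const d
  -- the volume of Iic ∩ Icc
  have hvol : ∀ a : ℝ, volume.restrict (Icc (0:ℝ) 1) (Iic a) = ENNReal.ofReal (min a 1) := by
    intro a
    rw [Measure.restrict_apply measurableSet_Iic]
    have : Iic a ∩ Icc (0:ℝ) 1 = Icc 0 (min a 1) := by
      ext x
      simp only [mem_inter_iff, mem_Iic, mem_Icc, le_min_iff]
      tauto
    rw [this, Real.volume_Icc, sub_zero]
  constructor
  · -- uniform marginals
    intro l
    have hae : (fun ω => (((π ω l : ℕ) : ℝ) + U ω l) / d)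
        =ᵐ[μ] fun ω => (((g ω l : ℕ) : ℝ) + U ω l) / d := by
      filter_upwards [hgπ] with ω h
      rw [h]
    rw [Measure.map_congr hae]
    haveI : IsProbabilityMeasure (μ.map fun ω => (((g ω l : ℕ) : ℝ) + U ω l) / d) :=
      Measure.isProbabilityMeasure_map (hW'meas l).aemeasurable
    refine Measure.ext_of_Iic _ _ fun t => ?_
    rw [Measure.map_apply (hW'meas l) measurableSet_Iic, hvol t]
    set W : Ω → ℝ := fun ω => (((g ω l : ℕ) : ℝ) + U ω l) / d with hWdef
    -- decompose over the fibers of g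
    have hdec : μ (W ⁻¹' Iic t) = ∑ σ, μ ({ω | g ω = σ} ∩ W ⁻¹' Iic t) := by
      have hdisjf : Pairwise (Function.onFun Disjoint
          (fun σ => {ω | g ω = σ} ∩ W ⁻¹' Iic t)) := by
        intro σ τ hστ
        exact Disjoint.mono inter_subset_left inter_subset_left
          (by rw [Set.disjoint_left]; rintro ω h1 h2; exact hστ (h1.symm.trans h2))
      have hm : ∀ σ, MeasurableSet ({ω | g ω = σ} ∩ W ⁻¹' Iic t) :=
        fun σ => (hfib σ).inter ((hW'meas l) measurableSet_Iic)
      have hcover : W ⁻¹' Iic t = ⋃ σ, ({ω | g ω = σ} ∩ W ⁻¹' Iic t) := by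
        ext ω
        simp only [mem_iUnion, mem_inter_iff, mem_setOf_eq]
        exact ⟨fun h => ⟨g ω, rfl, h⟩, fun ⟨σ, _, h⟩ => h⟩
      have hμeq := congrArg μ hcover
      rw [hμeq, measure_iUnion hdisjf hm, tsum_fintype]
    have hterm : ∀ σ : Equiv.Perm (Fin d), μ ({ω | g ω = σ} ∩ W ⁻¹' Iic t)
        = ((d.factorial : ℕ) : ENNReal)⁻¹ * ENNReal.ofReal (min (t * d - (σ l : ℕ)) 1) := by
      intro σ
      have hset : {ω | g ω = σ} ∩ W ⁻¹' Iic t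
          = {ω | g ω = σ} ∩ U ⁻¹' ((fun x : Fin d → ℝ => x l) ⁻¹' Iic (t * d - (σ l : ℕ))) := by
        ext ω
        simp only [mem_inter_iff, mem_setOf_eq, mem_preimage, mem_Iic, hWdef]
        constructor
        · rintro ⟨hg, hle⟩
          rw [hg] at hle
          refine ⟨hg, ?_⟩
          rw [div_le_iff₀ hd0] at hle
          linarith
        · rintro ⟨hg, hle⟩
          refine ⟨hg, ?_⟩
          rw [hg, div_le_iff₀ hd0]
          linarith
      have hs : MeasurableSet ((fun x : Fin d → ℝ => x l) ⁻¹' Iic (t * d - (σ l : ℕ))) :=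
        (measurable_pi_apply l) measurableSet_Iic
      have hcongr : μ ({ω | g ω = σ} ∩ U ⁻¹' ((fun x : Fin d → ℝ => x l) ⁻¹' Iic (t * d - (σ l : ℕ))))
          = μ ({ω | π ω = σ} ∩ U ⁻¹' ((fun x : Fin d → ℝ => x l) ⁻¹' Iic (t * d - (σ l : ℕ)))) := by
        apply measure_congr
        filter_upwards [hgπ] with ω h
        change (ω ∈ {ω | g ω = σ} ∩ _) = (ω ∈ {ω | π ω = σ} ∩ _)
        simp only [mem_inter_iff, mem_setOf_eq, h]
      rw [hset, hcongr, hindep σ _ hs, hπunif σ]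
      congr 1
      have : U ⁻¹' ((fun x : Fin d → ℝ => x l) ⁻¹' Iic (t * d - (σ l : ℕ)))
          = (fun ω => U ω l) ⁻¹' Iic (t * d - (σ l : ℕ)) := rfl
      rw [this, ← Measure.map_apply (hUl l) measurableSet_Iic, hmarg l, hvol]
    rw [hdec, Finset.sum_congr rfl fun σ _ => hterm σ]
    -- fiberwise sum over the value of σ l
    have hfibsum : ∑ σ : Equiv.Perm (Fin d),
        ((d.factorial : ℕ) : ENNReal)⁻¹ * ENNReal.ofReal (min (t * d - (σ l : ℕ)) 1)
        = ∑ k : Fin d, (Fintype.card {σ : Equiv.Perm (Fin d) // σ l = k} : ENNReal) *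
            (((d.factorial : ℕ) : ENNReal)⁻¹ * ENNReal.ofReal (min (t * d - (k : ℕ)) 1)) := by
      rw [← Fintype.sum_fiberwise' (fun σ : Equiv.Perm (Fin d) => σ l)
        (fun k => ((d.factorial : ℕ) : ENNReal)⁻¹ * ENNReal.ofReal (min (t * d - (k : ℕ)) 1))]
      refine Finset.sum_congr rfl fun k _ => ?_
      rw [Finset.sum_const, Finset.card_univ, nsmul_eq_mul]
    rw [hfibsum]
    -- the fiber cardinality is constant : c * d = d!
    set c : ℕ := Fintype.card {σ : Equiv.Perm (Fin d) // σ l = (0 : Fin d)} with hc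
    have hck : ∀ k : Fin d, Fintype.card {σ : Equiv.Perm (Fin d) // σ l = k} = c :=
      fun k => perm_fiber_card' d l k 0
    have hcd : c * d = d.factorial := by
      have h1 : ∑ k : Fin d, Fintype.card {σ : Equiv.Perm (Fin d) // σ l = k}
          = Fintype.card (Equiv.Perm (Fin d)) := by
        simp only [Fintype.card_subtype]
        rw [← Finset.card_eq_sum_card_fiberwise
          (fun (σ : Equiv.Perm (Fin d)) (_ : σ ∈ Finset.univ) => Finset.mem_univ (σ l))]
        exact Finset.card_univ
      rw [Finset.sum_congr rfl (fun k _ => hck k), Finset.sum_const, Finset.card_univ,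
        Fintype.card_fin, smul_eq_mul, hcard] at h1
      rw [mul_comm]; exact h1
    have hc0 : (c : ENNReal) ≠ 0 := by
      have : c ≠ 0 := by
        intro h
        rw [h, zero_mul] at hcd
        exact d.factorial_ne_zero hcd.symm
      exact_mod_cast Nat.cast_ne_zero.2 this
    have hcoef : ∀ k : Fin d, (Fintype.card {σ : Equiv.Perm (Fin d) // σ l = k} : ENNReal) *
        ((d.factorial : ℕ) : ENNReal)⁻¹ = ((d : ℕ) : ENNReal)⁻¹ := by
      intro k
      rw [hck k, ← hcd]
      push_cast
      rw [ENNReal.mul_inv (Or.inl hc0) (Or.inl (ENNReal.natCast_ne_top c)), ← mul_assoc,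
        ENNReal.mul_inv_cancel hc0 (ENNReal.natCast_ne_top c), one_mul]
    have hstep : ∑ k : Fin d, (Fintype.card {σ : Equiv.Perm (Fin d) // σ l = k} : ENNReal) *
            (((d.factorial : ℕ) : ENNReal)⁻¹ * ENNReal.ofReal (min (t * d - (k : ℕ)) 1))
        = ((d : ℕ) : ENNReal)⁻¹ * ∑ k : Fin d, ENNReal.ofReal (min (t * d - (k : ℕ)) 1) := by
      rw [Finset.mul_sum]
      refine Finset.sum_congr rfl fun k _ => ?_
      rw [← mul_assoc, hcoef k]
    rw [hstep]
    -- evaluate the remaining sum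
    have hsum2 : ∑ k : Fin d, ENNReal.ofReal (min (t * d - (k : ℕ)) 1)
        = ENNReal.ofReal ((d : ℝ) * min 1 (max 0 t)) := by
      have : ∀ k : Fin d, ENNReal.ofReal (min (t * d - (k : ℕ)) 1)
          = ENNReal.ofReal (min 1 (max 0 (t * d - (k : ℕ)))) := fun k => ofReal_min_one' _
      rw [Finset.sum_congr rfl fun k _ => this k,
        ← ENNReal.ofReal_sum_of_nonneg (fun k _ => le_min zero_le_one (le_max_left _ _))]
      congr 1
      rw [Fin.sum_univ_eq_sum_range (fun i => min 1 (max 0 (t * d - (i : ℕ))))]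
      rw [clamp_sum' d (t * d), min_scale' _ hd0 t]
    rw [hsum2, ENNReal.ofReal_mul hd0.le, ← mul_assoc, ENNReal.ofReal_natCast,
      ENNReal.inv_mul_cancel (by exact_mod_cast Nat.cast_ne_zero.2 (by omega : d ≠ 0))
        (ENNReal.natCast_ne_top d), one_mul, ofReal_min_one' t]
  · -- constant sum
    filter_upwards [hsum] with ω hω
    have hperm : ∑ l : Fin d, (((π ω l : ℕ):ℝ)) = ∑ l : Fin d, ((l : ℕ):ℝ) :=
      Equiv.sum_comp (π ω) (fun l => ((l : ℕ):ℝ))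
    have hgauss : ∑ l : Fin d, ((l : ℕ):ℝ) = d*(d-1)/2 := by
      rw [Fin.sum_univ_eq_sum_range (fun i => ((i:ℕ):ℝ))]
      have h2 : (∑ i ∈ Finset.range d, i) * 2 = d * (d - 1) := Finset.sum_range_id_mul_two d
      have : ((∑ i ∈ Finset.range d, i : ℕ) : ℝ) * 2 = (d:ℝ) * ((d:ℝ) - 1) := by
        rw [← Nat.cast_ofNat (n := 2), ← Nat.cast_mul, h2]
        push_cast [Nat.cast_sub hd]
        ring
      push_cast at this ⊢
      linarith
    rw [← Finset.sum_div, Finset.sum_add_distrib, hperm, hgauss, hω]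
    field_simp
    ring
end

section
/- In the degenerate random balanced sampling construction with d ≥ 2, each Z_l (l = 2,...,d) is uniformly distributed on the interval [c_l - 1/(d-1), c_l + 1/(d-1)] ⊂ [-1,1], where c_l = -1 + (2l-3)/(d-1), and after applying an independent uniformly random permutation to the coordinates, each permuted coordinate is uniform on [-1,1]. -/
open MeasureTheory Set

/-!
Each `Z_l` is the affine image `c_l - Z_1 / (d - 1)` of the uniform variable `Z_1`, hence uniform
on the image of `[-1, 1]`; these `d - 1` images tile `[-1, 1]` with equal lengths, so the laws of
`Z_1, …, Z_d` average to the uniform law on `[-1, 1]`. Every `Z_k` is a function of `Z_1`, which is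
independent of `σ`, so the law of `Z_{σ(l)}` is the average over `τ` of the laws of `Z_{τ(l)}`;
and `τ(l)` is uniformly distributed when `τ` is a uniform permutation.
-/

open ProbabilityTheory
open scoped ENNReal Nat

theorem ProbabilityTheory.cond_smul {Ω : Type*} [MeasurableSpace Ω] (μ : Measure Ω) (s : Set Ω)
    {k : ℝ≥0∞} (hk₀ : k ≠ 0) (hk : k ≠ ∞) : (k • μ)[|s] = μ[|s] := by
  rw [ProbabilityTheory.cond, ProbabilityTheory.cond, Measure.smul_apply, Measure.restrict_smul,
    smul_smul, smul_eq_mul, ENNReal.mul_inv (Or.inl hk₀) (Or.inl hk), mul_right_comm,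
    ENNReal.inv_mul_cancel hk₀ hk, one_mul]

theorem MeasurableEmbedding.map_cond {α β : Type*} [MeasurableSpace α] [MeasurableSpace β]
    {f : α → β} (hf : MeasurableEmbedding f) (μ : Measure α) (s : Set α) :
    (μ[|s]).map f = (μ.map f)[|f '' s] := by
  rw [ProbabilityTheory.cond, ProbabilityTheory.cond, Measure.map_smul, hf.restrict_map,
    hf.map_apply, hf.injective.preimage_image]

namespace MeasureTheory.pdf.IsUniform

variable {Ω E F : Type*} [MeasurableSpace Ω] [MeasurableSpace E] [MeasurableSpace F]
  {P : Measure Ω} {X : Ω → E} {s : Set E}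

theorem comp_measurableEmbedding {μ : Measure E} {ν : Measure F} {f : E → F} {k : ℝ≥0∞}
    (hu : IsUniform X s P μ) (hX : AEMeasurable X P) (hf : MeasurableEmbedding f)
    (hmap : μ.map f = k • ν) (hk₀ : k ≠ 0) (hk : k ≠ ∞) :
    IsUniform (f ∘ X) (f '' s) P ν := by
  rw [IsUniform, ← AEMeasurable.map_map_of_aemeasurable hf.measurable.aemeasurable hX, hu,
    hf.map_cond, hmap, cond_smul ν _ hk₀ hk]

theorem const_sub_div {X : Ω → ℝ} {a b : ℝ} (hu : IsUniform X (Icc a b) P)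
    (hX : AEMeasurable X P) (c : ℝ) {D : ℝ} (hD : 0 < D) :
    IsUniform (fun ω => c - X ω / D) (Icc (c - b / D) (c - a / D)) P := by
  have hD' : D⁻¹ ≠ 0 := inv_ne_zero hD.ne'
  have hf : MeasurableEmbedding fun x : ℝ => c - x / D :=
    (Homeomorph.subLeft c).measurableEmbedding.comp (measurableEmbedding_mulRight₀ hD')
  have hmap : volume.map (fun x : ℝ => c - x / D) = ENNReal.ofReal D • volume := by
    rw [show (fun x : ℝ => c - x / D) = (c - ·) ∘ (· / D) from rfl,
      ← Measure.map_map (measurable_const_sub c) (measurable_div_const D)]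
    simp only [div_eq_mul_inv]
    rw [Real.map_volume_mul_right hD', inv_inv, abs_of_pos hD, Measure.map_smul,
      Measure.map_sub_left_eq_self]
  have himage : (fun x : ℝ => c - x / D) '' Icc a b = Icc (c - b / D) (c - a / D) := by
    rw [← image_image (c - ·) (· / D)]
    simp only [div_eq_mul_inv]
    rw [image_mul_right_Icc' _ _ (inv_pos.2 hD), image_const_sub_Icc]
  rw [← himage]
  exact hu.comp_measurableEmbedding hX hf hmap (ENNReal.ofReal_pos.2 hD).ne'
    ENNReal.ofReal_ne_top

end MeasureTheory.pdf.IsUniform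

section NullMeasurable

variable {Ω : Type*} [MeasurableSpace Ω] {μ : Measure Ω} [IsFiniteMeasure μ]

theorem nullMeasurableSet_of_measure_add_measure_compl_le {s : Set Ω}
    (h : μ s + μ sᶜ ≤ μ univ) : NullMeasurableSet s μ := by
  set t := toMeasurable μ s
  have ht : MeasurableSet t := measurableSet_toMeasurable μ s
  have hst : s ⊆ t := subset_toMeasurable μ s
  have hcompl : μ sᶜ = μ (t \ s) + μ tᶜ := by
    rw [← measure_inter_add_sdiff sᶜ ht, inter_comm, sdiff_eq,
      inter_eq_right.2 (compl_subset_compl.2 hst)]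
    rfl
  have huniv : μ univ = μ s + μ tᶜ := by
    rw [← measure_toMeasurable s, measure_add_measure_compl ht]
  have hnull : μ (t \ s) = 0 := by
    rw [hcompl, huniv] at h
    refine nonpos_iff_eq_zero.1
      (ENNReal.le_of_add_le_add_left (a := μ s + μ tᶜ) (by finiteness) ?_)
    rw [add_zero]
    convert h using 1
    ring
  refine ht.nullMeasurableSet.congr (ae_eq_set.2 ⟨hnull, ?_⟩)
  rw [sdiff_eq_empty.2 hst, measure_empty]

theorem nullMeasurableSet_fiber_of_sum_measure_fiber_le {ι : Type*} [Fintype ι] {f : Ω → ι}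
    (h : ∑ i, μ {ω | f ω = i} ≤ μ univ) (i : ι) : NullMeasurableSet {ω | f ω = i} μ := by
  classical
  refine nullMeasurableSet_of_measure_add_measure_compl_le (le_trans ?_ h)
  rw [← Finset.add_sum_erase _ _ (Finset.mem_univ i)]
  gcongr
  calc μ {ω | f ω = i}ᶜ ≤ μ (⋃ j ∈ Finset.univ.erase i, {ω | f ω = j}) :=
        measure_mono fun ω hω => mem_biUnion (Finset.mem_erase.2 ⟨hω, Finset.mem_univ _⟩) rfl
    _ ≤ _ := measure_biUnion_finset_le _ _

end NullMeasurable

section Mixture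

variable {Ω ι E : Type*} {σ : Ω → ι} {X : ι → Ω → E}

theorem preimage_apply_fiber (s : Set E) :
    (fun ω => X (σ ω) ω) ⁻¹' s = ⋃ i, {ω | σ ω = i} ∩ X i ⁻¹' s := by
  ext ω
  simp

variable [MeasurableSpace Ω] [MeasurableSpace E] {μ : Measure Ω}

theorem nullMeasurable_apply_fiber [Countable ι] (hσ : ∀ i, NullMeasurableSet {ω | σ ω = i} μ)
    (hX : ∀ i, Measurable (X i)) : NullMeasurable (fun ω => X (σ ω) ω) μ := fun s hs => by
  rw [preimage_apply_fiber]
  exact .iUnion fun i => (hσ i).inter (hX i hs).nullMeasurableSet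

theorem map_apply_fiber_eq_sum [Fintype ι] [MeasurableSpace.CountablyGenerated E]
    (hσ : ∀ i, NullMeasurableSet {ω | σ ω = i} μ) (hX : ∀ i, Measurable (X i))
    (hind : ∀ i s, MeasurableSet s →
      μ ({ω | σ ω = i} ∩ X i ⁻¹' s) = μ {ω | σ ω = i} * μ (X i ⁻¹' s)) :
    μ.map (fun ω => X (σ ω) ω) = ∑ i, μ {ω | σ ω = i} • μ.map (X i) := by
  ext s hs
  have hdisj : Pairwise (Function.onFun (AEDisjoint μ) fun i => {ω | σ ω = i} ∩ X i ⁻¹' s) :=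
    fun i j hij => Disjoint.aedisjoint <| disjoint_left.2 fun ω hi hj => hij (hi.1.symm.trans hj.1)
  rw [Measure.map_apply_of_aemeasurable (nullMeasurable_apply_fiber hσ hX).aemeasurable hs,
    preimage_apply_fiber, measure_iUnion₀ hdisj fun i => (hσ i).inter (hX i hs).nullMeasurableSet,
    tsum_fintype, Measure.coe_finsetSum, Finset.sum_apply]
  simp [Measure.map_apply (hX _) hs, hind _ s hs]

end Mixture

namespace Equiv.Perm

variable {α M : Type*} [Fintype α] [DecidableEq α] [AddCommMonoid M]

theorem sum_comp_apply_eq (f : α → M) (a b : α) :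
    ∑ τ : Perm α, f (τ a) = ∑ τ : Perm α, f (τ b) := by
  simpa using (_root_.Equiv.sum_comp (Equiv.mulRight (swap a b)) fun τ => f (τ a)).symm

theorem card_nsmul_sum_comp_apply (f : α → M) (a : α) :
    Fintype.card α • ∑ τ : Perm α, f (τ a) = (Fintype.card α)! • ∑ b, f b := calc
  _ = ∑ b : α, ∑ τ : Perm α, f (τ b) := by
    rw [← Finset.card_univ, ← Finset.sum_const]
    exact Finset.sum_congr rfl fun b _ => sum_comp_apply_eq f a b
  _ = ∑ τ : Perm α, ∑ b, f (τ b) := Finset.sum_comm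
  _ = ∑ _τ : Perm α, ∑ b, f b := Finset.sum_congr rfl fun τ _ => _root_.Equiv.sum_comp τ f
  _ = _ := by rw [Finset.sum_const, Finset.card_univ, Fintype.card_perm]

theorem inv_factorial_smul_sum_comp_apply [Nonempty α] [Module ℝ≥0∞ M] (f : α → M) (a : α) :
    (((Fintype.card α)! : ℝ≥0∞))⁻¹ • ∑ τ : Perm α, f (τ a)
      = ((Fintype.card α : ℝ≥0∞))⁻¹ • ∑ b, f b := by
  set n := Fintype.card α
  have hn : (n : ℝ≥0∞) ≠ 0 := by simp [n, Fintype.card_ne_zero]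
  have hn! : (n ! : ℝ≥0∞) ≠ 0 := by simp [Nat.factorial_ne_zero]
  have h := card_nsmul_sum_comp_apply f a
  rw [← Nat.cast_smul_eq_nsmul ℝ≥0∞, ← Nat.cast_smul_eq_nsmul ℝ≥0∞] at h
  calc _ = (n ! : ℝ≥0∞)⁻¹ • (n : ℝ≥0∞)⁻¹ • ((n : ℝ≥0∞) • ∑ τ : Perm α, f (τ a)) := by
        rw [smul_smul (n : ℝ≥0∞)⁻¹, ENNReal.inv_mul_cancel hn (ENNReal.natCast_ne_top n), one_smul]
    _ = _ := by
        rw [h, smul_comm (n : ℝ≥0∞)⁻¹, smul_smul,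
          ENNReal.inv_mul_cancel hn! (ENNReal.natCast_ne_top _), one_smul]

end Equiv.Perm

theorem sum_restrict_Icc_of_monotone {μ : Measure ℝ} [NullSingletonClass μ] {g : ℕ → ℝ}
    (hg : Monotone g) (n : ℕ) :
    ∑ j ∈ Finset.range n, μ.restrict (Icc (g j) (g (j + 1))) = μ.restrict (Icc (g 0) (g n)) := by
  simp_rw [← restrict_Ioc_eq_restrict_Icc]
  induction n with
  | zero => simp
  | succ n ih =>
    rw [Finset.sum_range_succ, ih, ← Measure.restrict_union (Ioc_disjoint_Ioc_of_le le_rfl)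
      measurableSet_Ioc, Ioc_union_Ioc_eq_Ioc (hg n.zero_le) (hg n.le_succ)]

theorem sum_cond_volume_Icc_add_mul (a h : ℝ) (hh : 0 < h) (n : ℕ) :
    ∑ j ∈ Finset.range n, volume[|Icc (a + j * h) (a + (j + 1) * h)]
      = n • volume[|Icc a (a + n * h)] := by
  have hg : Monotone fun j : ℕ => a + j * h := fun i j hij => by
    dsimp only; gcongr
  have hcond : ∀ j : ℕ, volume[|Icc (a + j * h) (a + (j + 1) * h)]
      = (ENNReal.ofReal h)⁻¹ • volume.restrict (Icc (a + j * h) (a + ((j + 1 : ℕ) : ℝ) * h)) := by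
    intro j
    rw [ProbabilityTheory.cond, Real.volume_Icc]
    push_cast
    ring_nf
  rcases n.eq_zero_or_pos with rfl | hn
  · simp
  have hsum := sum_restrict_Icc_of_monotone (μ := volume) hg n
  rw [Finset.sum_congr rfl fun j _ => hcond j, ← Finset.smul_sum, hsum, ProbabilityTheory.cond,
    Real.volume_Icc, ← Nat.cast_smul_eq_nsmul ℝ≥0∞, smul_smul]
  simp only [Nat.cast_zero, zero_mul, add_zero, add_sub_cancel_left]
  rw [ENNReal.ofReal_mul (Nat.cast_nonneg n), ENNReal.ofReal_natCast,
    ENNReal.mul_inv (Or.inl (by simp [hn.ne'])) (Or.inl (ENNReal.natCast_ne_top n)), ← mul_assoc,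
    ENNReal.mul_inv_cancel (by simp [hn.ne']) (ENNReal.natCast_ne_top n), one_mul]

noncomputable def balancedCenter (d l : ℕ) : ℝ := -1 + (2 * (l : ℝ) - 3) / ((d : ℝ) - 1)

theorem Icc_balancedCenter_subset {d l : ℕ} (hl : 2 ≤ l) (hld : l ≤ d) :
    Icc (balancedCenter d l - 1 / ((d : ℝ) - 1)) (balancedCenter d l + 1 / ((d : ℝ) - 1))
      ⊆ Icc (-1) 1 := by
  have hl' : (2 : ℝ) ≤ l := by exact_mod_cast hl
  have hld' : (l : ℝ) ≤ d := by exact_mod_cast hld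
  have hD : (0 : ℝ) < d - 1 := by linarith
  have hlow : 1 / ((d : ℝ) - 1) ≤ (2 * l - 3) / (d - 1) :=
    div_le_div_of_nonneg_right (by linarith) hD.le
  have hupp : (2 * (l : ℝ) - 3) / (d - 1) + 1 / (d - 1) ≤ 2 := by
    rw [← add_div, div_le_iff₀ hD]
    linarith
  exact Icc_subset_Icc (by rw [balancedCenter]; linarith) (by rw [balancedCenter]; linarith)

section BalancedSampling

variable {Ω : Type*} {d : ℕ} {Z : ℕ → Ω → ℝ}

theorem exists_measurable_comp_of_balanced
    (hZl : ∀ l, 2 ≤ l → l ≤ d → Z l = fun ω => balancedCenter d l - Z 1 ω / ((d : ℝ) - 1))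
    {k : ℕ} (hk : k < d) : ∃ g : ℝ → ℝ, Measurable g ∧ Z (k + 1) = g ∘ Z 1 := by
  rcases k.eq_zero_or_pos with rfl | hk₀
  · exact ⟨id, measurable_id, rfl⟩
  · refine ⟨fun x => balancedCenter d (k + 1) - x / ((d : ℝ) - 1), by fun_prop, ?_⟩
    rw [hZl (k + 1) (by omega) hk]
    rfl

variable [MeasurableSpace Ω] {μ : Measure Ω}

theorem isUniform_balanced_coord (hZ1meas : Measurable (Z 1))
    (hZ1 : pdf.IsUniform (Z 1) (Icc (-1 : ℝ) 1) μ)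
    (hZl : ∀ l, 2 ≤ l → l ≤ d → Z l = fun ω => balancedCenter d l - Z 1 ω / ((d : ℝ) - 1))
    {l : ℕ} (hl : 2 ≤ l) (hld : l ≤ d) :
    pdf.IsUniform (Z l)
      (Icc (balancedCenter d l - 1 / ((d : ℝ) - 1)) (balancedCenter d l + 1 / ((d : ℝ) - 1)))
      μ := by
  have hD : (0 : ℝ) < d - 1 := by
    have : (2 : ℝ) ≤ d := by exact_mod_cast hl.trans hld
    linarith
  rw [hZl l hl hld, ← sub_neg_eq_add, ← neg_div]
  exact hZ1.const_sub_div hZ1meas.aemeasurable _ hD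

theorem sum_map_balanced_coords (hd : 2 ≤ d) (hZ1meas : Measurable (Z 1))
    (hZ1 : pdf.IsUniform (Z 1) (Icc (-1 : ℝ) 1) μ)
    (hZl : ∀ l, 2 ≤ l → l ≤ d → Z l = fun ω => balancedCenter d l - Z 1 ω / ((d : ℝ) - 1)) :
    ∑ k : Fin d, μ.map (Z (k + 1)) = d • volume[|Icc (-1 : ℝ) 1] := by
  obtain ⟨e, rfl⟩ : ∃ e, d = e + 1 := ⟨d - 1, by omega⟩
  have he : (0 : ℝ) < e := by exact_mod_cast (by omega : 0 < e)
  have he₀ : (e : ℝ) ≠ 0 := he.ne'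
  have hlaw : ∀ j ∈ Finset.range e, μ.map (Z (j + 1 + 1))
      = volume[|Icc ((-1 : ℝ) + j * (2 / e)) (-1 + (j + 1) * (2 / e))] := by
    intro j hj
    have hj' := Finset.mem_range.1 hj
    rw [isUniform_balanced_coord hZ1meas hZ1 hZl (by omega) (by omega), balancedCenter]
    congr 2 <;> push_cast <;> simp only [add_sub_cancel_right] <;> field_simp <;> ring
  rw [Fin.sum_univ_succ]
  simp only [Fin.val_zero, zero_add, Fin.val_succ]
  rw [Fin.sum_univ_eq_sum_range (fun j => μ.map (Z (j + 1 + 1))) e, Finset.sum_congr rfl hlaw,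
    sum_cond_volume_Icc_add_mul _ _ (by positivity), mul_div_cancel₀ _ he₀, hZ1, succ_nsmul']
  norm_num

end BalancedSampling

/-- Degenerate random balanced sampling: `Z_1 ~ Uniform(-1,1)`,
`Z_l = c_l - Z_1/(d-1)` with `c_l = -1 + (2l-3)/(d-1)` for `l = 2,…,d`.
Each such `Z_l` is uniform on `[c_l - 1/(d-1), c_l + 1/(d-1)] ⊆ [-1,1]`, and
after applying an independent uniformly random permutation of the coordinates,
each permuted coordinate is uniform on `[-1,1]`. -/
theorem random_balanced_sampling_uniform {Ω : Type*} [MeasurableSpace Ω]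
    (μ : Measure Ω) [IsProbabilityMeasure μ] (d : ℕ) (hd : 2 ≤ d)
    (Z : ℕ → Ω → ℝ) (hZ1meas : Measurable (Z 1))
    (hZ1 : pdf.IsUniform (Z 1) (Icc (-1:ℝ) 1) μ volume)
    (hZl : ∀ l, 2 ≤ l → l ≤ d →
      Z l = fun ω => (-1 + (2 * (l:ℝ) - 3) / ((d:ℝ) - 1)) - Z 1 ω / ((d:ℝ) - 1))
    (σ : Ω → Equiv.Perm (Fin d))
    (hσunif : ∀ τ : Equiv.Perm (Fin d),
      μ {ω | σ ω = τ} = (Nat.factorial d : ENNReal)⁻¹)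
    (hindep : ∀ τ : Equiv.Perm (Fin d), ∀ s : Set ℝ, MeasurableSet s →
      μ ({ω | σ ω = τ} ∩ (Z 1) ⁻¹' s) = μ {ω | σ ω = τ} * μ ((Z 1) ⁻¹' s)) :
    (∀ l, 2 ≤ l → l ≤ d →
      pdf.IsUniform (Z l)
        (Icc ((-1 + (2 * (l:ℝ) - 3) / ((d:ℝ) - 1)) - 1 / ((d:ℝ) - 1))
             ((-1 + (2 * (l:ℝ) - 3) / ((d:ℝ) - 1)) + 1 / ((d:ℝ) - 1))) μ volume ∧
      Icc ((-1 + (2 * (l:ℝ) - 3) / ((d:ℝ) - 1)) - 1 / ((d:ℝ) - 1))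
          ((-1 + (2 * (l:ℝ) - 3) / ((d:ℝ) - 1)) + 1 / ((d:ℝ) - 1)) ⊆ Icc (-1:ℝ) 1) ∧
    (∀ l : Fin d,
      pdf.IsUniform (fun ω => Z ((σ ω l : ℕ) + 1) ω) (Icc (-1:ℝ) 1) μ volume) := by
  refine ⟨fun l hl hld => ⟨isUniform_balanced_coord hZ1meas hZ1 hZl hl hld,
    Icc_balancedCenter_subset hl hld⟩, fun l => ?_⟩
  -- `σ` is not assumed measurable: its fibres are null measurable because their outer measures
  -- add up to `μ univ`.
  have hfiber : ∀ τ, NullMeasurableSet {ω | σ ω = τ} μ :=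
    nullMeasurableSet_fiber_of_sum_measure_fiber_le (by
      simp [hσunif, Fintype.card_perm, ENNReal.mul_inv_cancel, Nat.factorial_ne_zero])
  choose g hg hZg using fun τ : Equiv.Perm (Fin d) =>
    exists_measurable_comp_of_balanced hZl (τ l).is_lt
  have hind : ∀ τ s, MeasurableSet s → μ ({ω | σ ω = τ} ∩ Z (τ l + 1) ⁻¹' s)
      = μ {ω | σ ω = τ} * μ (Z (τ l + 1) ⁻¹' s) := fun τ s hs => by
    rw [hZg τ, preimage_comp]
    exact hindep τ _ (hg τ hs)
  have : Nonempty (Fin d) := ⟨l⟩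
  have hperm := Equiv.Perm.inv_factorial_smul_sum_comp_apply
    (fun k : Fin d => μ.map (Z (k + 1))) l
  rw [Fintype.card_fin] at hperm
  rw [pdf.IsUniform, map_apply_fiber_eq_sum (X := fun τ ω => Z ((τ l : ℕ) + 1) ω) hfiber
    (fun τ => hZg τ ▸ (hg τ).comp hZ1meas) hind]
  simp_rw [hσunif]
  rw [← Finset.smul_sum, hperm, sum_map_balanced_coords hd hZ1meas hZ1 hZl,
    ← Nat.cast_smul_eq_nsmul ℝ≥0∞, smul_smul,
    ENNReal.inv_mul_cancel (Nat.cast_ne_zero.2 (by omega)) (ENNReal.natCast_ne_top d), one_smul]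
end
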